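/- arXiv:1210.6139 — 2 statements merged into one kernel-verified Lean document; each statement's English description precedes it below -/
import Mathlib

section
/- For every integer n ≥ 1 and every fixed x ∈ ℝ, the derivative of the Kravchuk polynomial with respect to a satisfies d/da K_n(x,a) = ∑_{i=0}^{n−1} ((−1)^{n+1+i}/(n−i))·K_i(x,a). -/
/-- Generalized binomial coefficient `C(t, k) = t(t-1)⋯(t-k+1)/k!` of a real number. -/
noncomputable def genBinom (t : ℝ) (k : ℕ) : ℝ :=
  (∏ j ∈ Finset.range k, (t - j)) / (Nat.factorial k)

/-- The binary Kravchuk polynomial `K_n(x,a) = ∑_{i=0}^n (-1)^i C(x,i) C(a-x, n-i)`. -/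
noncomputable def K (n : ℕ) (x a : ℝ) : ℝ :=
  ∑ i ∈ Finset.range (n + 1), (-1 : ℝ) ^ i * genBinom x i * genBinom (a - x) (n - i)

/-!
`K n x a` is the `n`-th coefficient of the generating function `(1 - z) ^ x * (1 + z) ^ (a - x)`.
Since `(1 + z) ^ (a + h) = (1 + z) ^ a * (1 + z) ^ h` (Chu–Vandermonde), this gives
`K_n(x, a + h) = ∑_j C(h, j) K_{n-j}(x, a)`, and differentiating at `h = 0` with
`d/dh C(h, j) |_{h=0} = (-1)^(j+1) / j` (the coefficients of `log (1 + z)`) yields the formula.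
-/

open Finset PowerSeries

theorem genBinom_eq_choose (t : ℝ) (k : ℕ) : genBinom t k = Ring.choose t k := by
  rw [Ring.choose_eq_smul, genBinom, ← Polynomial.aeval_eq_smeval, Polynomial.aeval_def,
    Polynomial.eval₂_eq_eval_map, descPochhammer_map, descPochhammer_eval_eq_prod_range,
    smul_eq_mul, div_eq_inv_mul]

noncomputable def kravchukSeries (x a : ℝ) : ℝ⟦X⟧ :=
  rescale (-1) (PowerSeries.binomialSeries ℝ x) * PowerSeries.binomialSeries ℝ (a - x)

theorem coeff_kravchukSeries (n : ℕ) (x a : ℝ) : coeff n (kravchukSeries x a) = K n x a := by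
  simp [kravchukSeries, K, coeff_mul, Nat.sum_antidiagonal_eq_sum_range_succ_mk,
    genBinom_eq_choose]

theorem kravchukSeries_add (x a h : ℝ) :
    kravchukSeries x (a + h) = kravchukSeries x a * PowerSeries.binomialSeries ℝ h := by
  rw [kravchukSeries, kravchukSeries, add_sub_right_comm, binomialSeries_add, mul_assoc]

theorem K_add_eq_sum_antidiagonal (n : ℕ) (x a h : ℝ) :
    K n x (a + h) = ∑ p ∈ antidiagonal n, K p.1 x a * genBinom h p.2 := by
  simp [← coeff_kravchukSeries, kravchukSeries_add, coeff_mul, genBinom_eq_choose]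

/-- For `j = 0` the value is `(-1) / 0 = 0`, the derivative of the constant `C(h, 0) = 1`. -/
theorem hasDerivAt_genBinom_zero (j : ℕ) :
    HasDerivAt (fun h => genBinom h j) ((-1) ^ (j + 1) / j) 0 := by
  cases j with
  | zero => simpa [genBinom] using hasDerivAt_const (0 : ℝ) (1 : ℝ)
  | succ j =>
    set g : ℝ → ℝ := fun h => ∏ i ∈ range j, (h - (i + 1 : ℕ))
    have hg : g 0 = (-1) ^ j * j.factorial := by
      simp only [g, zero_sub, prod_neg, card_range]
      rw [← prod_range_add_one_eq_factorial j]
      push_cast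
      rfl
    have hprod : HasDerivAt (fun h => h * g h) (g 0) 0 := by
      have hgd : DifferentiableAt ℝ g 0 := by fun_prop
      exact ((hasDerivAt_id' 0).fun_mul hgd.hasDerivAt).congr_deriv (by simp)
    have hsplit : (fun h => genBinom h (j + 1)) = fun h => h * g h / (j + 1).factorial := by
      funext h
      rw [genBinom, prod_range_succ', Nat.cast_zero, sub_zero, mul_comm]
    rw [hsplit]
    refine (hprod.div_const _).congr_deriv ?_
    rw [hg, Nat.factorial_succ]
    push_cast
    field_simp
    ring

theorem kravchuk_deriv_a_general (n : ℕ) (x a : ℝ) :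
    deriv (fun t : ℝ => K n x t) a
      = ∑ i ∈ Finset.range n, ((-1 : ℝ) ^ (n + 1 + i) / ((n : ℝ) - (i : ℝ))) * K i x a := by
  have hshift : (fun t => K n x t) =
      fun t => ∑ p ∈ antidiagonal n, K p.1 x a * genBinom (t - a) p.2 := by
    funext t
    rw [← K_add_eq_sum_antidiagonal, add_sub_cancel]
  have hderiv : HasDerivAt (fun t => K n x t)
      (∑ p ∈ antidiagonal n, K p.1 x a * ((-1) ^ (p.2 + 1) / p.2)) a := by
    rw [hshift]
    refine HasDerivAt.fun_sum fun p _ => HasDerivAt.const_mul _ ?_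
    exact .comp_sub_const a a (by rw [sub_self]; exact hasDerivAt_genBinom_zero p.2)
  rw [hderiv.deriv,
    Nat.sum_antidiagonal_eq_sum_range_succ (fun i j => K i x a * ((-1) ^ (j + 1) / j)),
    sum_range_succ, Nat.sub_self, Nat.cast_zero, div_zero, mul_zero, add_zero]
  refine sum_congr rfl fun i hmem => ?_
  have hi : i ≤ n := (mem_range.1 hmem).le
  have hsign : (-1 : ℝ) ^ (n + 1 + i) = (-1) ^ (n - i + 1) := by
    rw [show n + 1 + i = n - i + 1 + 2 * i by omega, pow_add, pow_mul, neg_one_sq, one_pow, mul_one]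
  rw [Nat.cast_sub hi, hsign, mul_comm]

/-- For `n ≥ 1`, `d/da K_n(x,a) = ∑_{i=0}^{n-1} ((-1)^{n+1+i}/(n-i)) K_i(x,a)`. -/
theorem kravchuk_deriv_a (n : ℕ) (hn : 1 ≤ n) (x a : ℝ) :
    deriv (fun t : ℝ => K n x t) a
      = ∑ i ∈ Finset.range n, ((-1 : ℝ) ^ (n + 1 + i) / ((n : ℝ) - (i : ℝ))) * K i x a :=
  kravchuk_deriv_a_general n x a
end

section
/- Let ψ : ℚ[x_0,…,x_N] → ℚ[x_0,…,x_N] be the ℚ-algebra homomorphism with ψ(x_0) = x_0 and ψ(x_n) = ∑_{i=1}^{n} i!·S(n,i)·x_i for 1 ≤ n ≤ N, and let D be the basic Weitzenböck derivation, D(x_0) = 0 and D(x_n) = n·x_{n−1} for 1 ≤ n ≤ N. Then ψ intertwines D and the second Kravchuk derivation: D_{K2}(ψ(P)) = ψ(D(P)) for all P ∈ ℚ[x_0,…,x_N]. -/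
/-- Stirling numbers of the second kind: the number of partitions of an `n`-element
set into `k` nonempty blocks (via the standard recurrence). -/
def stirling2 : ℕ → ℕ → ℕ
  | 0, 0 => 1
  | 0, _ + 1 => 0
  | _ + 1, 0 => 0
  | n + 1, k + 1 => stirling2 n k + (k + 1) * stirling2 n (k + 1)

lemma stirling2_zero_right : ∀ n, stirling2 (n+1) 0 = 0 := fun _ => rfl

lemma stirling2_succ_succ (n k : ℕ) :
    stirling2 (n+1) (k+1) = stirling2 n k + (k+1) * stirling2 n (k+1) := rfl

lemma stirling2_of_lt : ∀ n k, n < k → stirling2 n k = 0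
  | 0, k+1, _ => rfl
  | n+1, k+1, h => by
      rw [stirling2_succ_succ, stirling2_of_lt n k (by omega), stirling2_of_lt n (k+1) (by omega)]
      ring

lemma stirling2_self : ∀ n, stirling2 n n = 1
  | 0 => rfl
  | n+1 => by
      rw [stirling2_succ_succ, stirling2_self n, stirling2_of_lt n (n+1) (by omega)]; ring

open Finset Nat in
lemma step_common (n j : ℕ) (hj : j ≤ n + 1) :
    ∑ i ∈ Icc (j+1) (n+2), (-1:ℚ)^(i+1+j) * (i ! : ℚ) / ((i:ℚ) - (j:ℚ)) * (stirling2 (n+2) i : ℚ)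
    = ((j+1)! : ℚ) * (stirling2 (n+1) j : ℚ)
      + ∑ i ∈ Icc (j+1) (n+1),
          ((-1:ℚ)^(i+j) * ((i+1)! : ℚ) / ((i:ℚ) + 1 - (j:ℚ))
            + (-1:ℚ)^(i+1+j) * (i:ℚ) * (i ! : ℚ) / ((i:ℚ) - (j:ℚ))) * (stirling2 (n+1) i : ℚ) := by
  have h1 : ∀ i ∈ Icc (j+1) (n+2),
      (-1:ℚ)^(i+1+j) * (i ! : ℚ) / ((i:ℚ) - (j:ℚ)) * (stirling2 (n+2) i : ℚ)
      = (-1:ℚ)^(i+1+j) * (i ! : ℚ) / ((i:ℚ) - (j:ℚ)) * (stirling2 (n+1) (i-1) : ℚ)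
        + (-1:ℚ)^(i+1+j) * (i:ℚ) * (i ! : ℚ) / ((i:ℚ) - (j:ℚ)) * (stirling2 (n+1) i : ℚ) := by
    intro i hi
    simp only [mem_Icc] at hi
    obtain ⟨k, rfl⟩ : ∃ k, i = k + 1 := ⟨i - 1, by omega⟩
    rw [stirling2_succ_succ]
    push_cast
    ring
  rw [Finset.sum_congr rfl h1, Finset.sum_add_distrib]
  have h2 : ∑ i ∈ Icc (j+1) (n+2), (-1:ℚ)^(i+1+j) * (i ! : ℚ) / ((i:ℚ) - (j:ℚ)) * (stirling2 (n+1) (i-1) : ℚ)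
      = ∑ k ∈ Icc j (n+1), (-1:ℚ)^(k+j) * (((k+1)!) : ℚ) / ((k:ℚ) + 1 - (j:ℚ)) * (stirling2 (n+1) k : ℚ) := by
    rw [← Finset.map_add_right_Icc j (n+1) 1, Finset.sum_map]
    refine Finset.sum_congr rfl fun k _ => ?_
    simp only [addRightEmbedding_apply, Nat.add_sub_cancel]
    push_cast
    ring
  rw [h2]
  have hins : Icc j (n+1) = insert j (Icc (j+1) (n+1)) := by
    ext x; simp only [mem_Icc, mem_insert]; omega
  rw [hins, Finset.sum_insert (by simp [mem_Icc])]
  have hsign : (-1:ℚ)^(j+j) = 1 := by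
    rw [show j + j = 2*j by omega, pow_mul]; norm_num
  have hjj : (j:ℚ) + 1 - (j:ℚ) = 1 := by ring
  rw [hsign, hjj]
  have htop : ∑ i ∈ Icc (j+1) (n+2), (-1:ℚ)^(i+1+j) * (i:ℚ) * (i ! : ℚ) / ((i:ℚ) - (j:ℚ)) * (stirling2 (n+1) i : ℚ)
      = ∑ i ∈ Icc (j+1) (n+1), (-1:ℚ)^(i+1+j) * (i:ℚ) * (i ! : ℚ) / ((i:ℚ) - (j:ℚ)) * (stirling2 (n+1) i : ℚ) := by
    rw [Finset.sum_Icc_succ_top (by omega)]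
    rw [stirling2_of_lt (n+1) (n+2) (by omega)]
    push_cast
    ring
  rw [htop, add_assoc, ← Finset.sum_add_distrib]
  congr 1
  · field_simp
  · refine Finset.sum_congr rfl fun i _ => ?_
    ring

open Finset Nat in
lemma key : ∀ n : ℕ, ∀ j ≤ n,
    ∑ i ∈ Icc (j+1) (n+1), (-1:ℚ)^(i+1+j) * (i ! : ℚ) / ((i:ℚ) - (j:ℚ)) * (stirling2 (n+1) i : ℚ)
    = ((n:ℚ)+1) * (j ! : ℚ) * (stirling2 n j : ℚ)
  | 0, j, hj => by
    interval_cases j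
    norm_num [stirling2]
  | n+1, j, hj => by
    rw [step_common n j hj]
    rcases Nat.eq_zero_or_pos j with rfl | hj1
    · -- j = 0
      have hz : ∀ i ∈ Icc (0+1) (n+1),
          ((-1:ℚ)^(i+0) * ((i+1)! : ℚ) / ((i:ℚ) + 1 - (0:ℕ)) + (-1:ℚ)^(i+1+0) * (i:ℚ) * (i ! : ℚ) / ((i:ℚ) - (0:ℕ)))
            * (stirling2 (n+1) i : ℚ) = 0 := by
        intro i hi
        simp only [mem_Icc] at hi
        have hi0 : (i:ℚ) ≠ 0 := by
          have : 1 ≤ i := hi.1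
          exact_mod_cast (by omega : i ≠ 0)
        rw [Nat.factorial_succ]
        push_cast
        field_simp
        ring
      rw [Finset.sum_eq_zero hz]
      simp [stirling2_zero_right]
    · rcases eq_or_lt_of_le hj with rfl | hjn
      · -- j = n+1
        rw [show Icc (n+1+1) (n+1) = (∅ : Finset ℕ) from Finset.Icc_eq_empty (by omega)]
        simp only [Finset.sum_empty, stirling2_self, Nat.cast_one, add_zero]
        rw [Nat.factorial_succ (n+1)]
        push_cast
        ring
      · have hj' : j ≤ n := by omega
        have hjc : ((j-1 : ℕ) : ℚ) = (j:ℚ) - 1 := by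
          push_cast [hj1]
          ring
        have hpoint : ∀ i ∈ Icc (j+1) (n+1),
            ((-1:ℚ)^(i+j) * ((i+1)! : ℚ) / ((i:ℚ) + 1 - (j:ℚ))
              + (-1:ℚ)^(i+1+j) * (i:ℚ) * (i ! : ℚ) / ((i:ℚ) - (j:ℚ))) * (stirling2 (n+1) i : ℚ)
            = (j:ℚ) * ((-1:ℚ)^(i+1+(j-1)) * (i ! : ℚ) / ((i:ℚ) - ((j-1:ℕ):ℚ)) * (stirling2 (n+1) i : ℚ))
              + (j:ℚ) * ((-1:ℚ)^(i+1+j) * (i ! : ℚ) / ((i:ℚ) - (j:ℚ)) * (stirling2 (n+1) i : ℚ)) := by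
          intro i hi
          simp only [mem_Icc] at hi
          have h1 : (i:ℚ) - (j:ℚ) ≠ 0 := by
            have : (j:ℚ) < (i:ℚ) := by exact_mod_cast (by omega : j < i)
            linarith
          have h2 : (i:ℚ) + 1 - (j:ℚ) ≠ 0 := by
            have : (j:ℚ) < (i:ℚ) := by exact_mod_cast (by omega : j < i)
            linarith
          rw [hjc, show i+1+(j-1) = i+j by omega, Nat.factorial_succ]
          have h3 : (i:ℚ) - ((j:ℚ) - 1) ≠ 0 := by
            have : (j:ℚ) < (i:ℚ) := by exact_mod_cast (by omega : j < i)
            linarith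
          push_cast
          field_simp
          ring
        rw [Finset.sum_congr rfl hpoint, Finset.sum_add_distrib, ← Finset.mul_sum, ← Finset.mul_sum]
        rw [key n j hj']
        have hfirst : ∑ i ∈ Icc (j+1) (n+1),
            (-1:ℚ)^(i+1+(j-1)) * (i ! : ℚ) / ((i:ℚ) - ((j-1:ℕ):ℚ)) * (stirling2 (n+1) i : ℚ)
            = ((n:ℚ)+1) * ((j-1)! : ℚ) * (stirling2 n (j-1) : ℚ) - (j ! : ℚ) * (stirling2 (n+1) j : ℚ) := by
          have hk := key n (j-1) (by omega)
          rw [show (j-1)+1 = j by omega] at hk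
          rw [show Icc j (n+1) = insert j (Icc (j+1) (n+1)) by ext x; simp only [mem_Icc, mem_insert]; omega] at hk
          rw [Finset.sum_insert (by simp [mem_Icc])] at hk
          have hterm : (-1:ℚ)^(j+1+(j-1)) * (j ! : ℚ) / ((j:ℚ) - ((j-1:ℕ):ℚ)) * (stirling2 (n+1) j : ℚ)
              = (j ! : ℚ) * (stirling2 (n+1) j : ℚ) := by
            rw [hjc, show j+1+(j-1) = 2*j by omega, pow_mul]
            norm_num
          rw [hterm] at hk
          linarith
        rw [hfirst]
        have hrec : (stirling2 (n+1) j : ℚ) = (stirling2 n (j-1) : ℚ) + (j:ℚ) * (stirling2 n j : ℚ) := by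
          obtain ⟨l, rfl⟩ : ∃ l, j = l + 1 := ⟨j-1, by omega⟩
          rw [stirling2_succ_succ]
          push_cast
          ring
        have hfac : (j:ℚ) * ((j-1)! : ℚ) = (j ! : ℚ) := by
          obtain ⟨l, rfl⟩ : ∃ l, j = l + 1 := ⟨j-1, by omega⟩
          rw [Nat.add_sub_cancel, Nat.factorial_succ]
          push_cast
          ring
        have hfacsucc : (((j+1)!) : ℚ) = ((j:ℚ)+1) * (j ! : ℚ) := by
          rw [Nat.factorial_succ]
          push_cast
          ring
        rw [hrec, hfacsucc]
        push_cast
        linear_combination ((n:ℚ)+1) * (stirling2 n (j-1) : ℚ) * hfac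

/-- The variable `x_i` of `ℚ[x_0,…,x_N]` (for `i ≤ N`). -/
noncomputable def Xv (N : ℕ) (i : ℕ) : MvPolynomial (Fin (N + 1)) ℚ :=
  if h : i ≤ N then MvPolynomial.X ⟨i, Nat.lt_succ_of_le h⟩ else 0

/-- The second Kravchuk derivation: `D_{K2}(x_0)=0`,
`D_{K2}(x_m)=∑_{i=0}^{m-1} ((-1)^{m+1+i}/(m-i)) x_i`. -/
noncomputable def DK2 (N : ℕ) :
    Derivation ℚ (MvPolynomial (Fin (N + 1)) ℚ) (MvPolynomial (Fin (N + 1)) ℚ) :=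
  MvPolynomial.mkDerivation ℚ fun m : Fin (N + 1) =>
    ∑ i ∈ Finset.range (m : ℕ),
      MvPolynomial.C ((-1 : ℚ) ^ ((m : ℕ) + 1 + i) / (((m : ℕ) : ℚ) - (i : ℚ))) * Xv N i

/-- The basic Weitzenböck derivation: `D(x_0)=0`, `D(x_n)=n x_{n-1}`. -/
noncomputable def DW (N : ℕ) :
    Derivation ℚ (MvPolynomial (Fin (N + 1)) ℚ) (MvPolynomial (Fin (N + 1)) ℚ) :=
  MvPolynomial.mkDerivation ℚ fun n : Fin (N + 1) =>
    MvPolynomial.C (((n : ℕ) : ℚ)) * Xv N ((n : ℕ) - 1)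

/-- The `ℚ`-algebra homomorphism `ψ` with `ψ(x_0)=x_0`, `ψ(x_n)=∑_{i=1}^n i!·S(n,i)·x_i`. -/
noncomputable def psiAK2 (N : ℕ) :
    MvPolynomial (Fin (N + 1)) ℚ →ₐ[ℚ] MvPolynomial (Fin (N + 1)) ℚ :=
  MvPolynomial.aeval fun n : Fin (N + 1) =>
    if (n : ℕ) = 0 then Xv N 0
    else ∑ i ∈ Finset.Icc 1 (n : ℕ),
      MvPolynomial.C ((Nat.factorial i : ℚ) * stirling2 (n : ℕ) i) * Xv N i

open Finset Nat MvPolynomial in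
lemma psi_Xv (N i : ℕ) (hi : i ≤ N) :
    psiAK2 N (Xv N i) = ∑ j ∈ range (i+1), C ((j ! : ℚ) * stirling2 i j) * Xv N j := by
  rw [Xv, dif_pos hi, psiAK2, MvPolynomial.aeval_X]
  simp only [Fin.val_mk]
  rcases Nat.eq_zero_or_pos i with rfl | h1
  · simp [Finset.sum_range_one, stirling2]
  · rw [if_neg (by omega)]
    have hr : range (i+1) = insert 0 (Icc 1 i) := by
      ext x; simp only [mem_range, mem_insert, mem_Icc]; omega
    rw [hr, Finset.sum_insert (by simp)]
    obtain ⟨k, rfl⟩ : ∃ k, i = k + 1 := ⟨i - 1, by omega⟩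
    rw [stirling2_zero_right]
    simp

open Finset Nat MvPolynomial in
lemma DK2_Xv (N i : ℕ) (hi : i ≤ N) :
    DK2 N (Xv N i) = ∑ j ∈ range i, C ((-1:ℚ)^(i+1+j) / ((i:ℚ) - (j:ℚ))) * Xv N j := by
  rw [Xv, dif_pos hi, DK2, MvPolynomial.mkDerivation_X]

open Finset Nat MvPolynomial in
lemma gen_intertwine (N : ℕ) (n : Fin (N+1)) :
    DK2 N (psiAK2 N (MvPolynomial.X n)) = psiAK2 N (DW N (MvPolynomial.X n)) := by
  have hmN : (n : ℕ) ≤ N := by omega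
  rw [DW, MvPolynomial.mkDerivation_X, map_mul, ← MvPolynomial.algebraMap_eq, AlgHom.commutes,
    MvPolynomial.algebraMap_eq]
  rcases Nat.eq_zero_or_pos (n : ℕ) with h0 | h1
  · rw [h0]
    have : psiAK2 N (MvPolynomial.X n) = Xv N 0 := by
      rw [psiAK2, MvPolynomial.aeval_X, if_pos h0]
    rw [this, DK2_Xv N 0 (by omega)]
    simp
  · set m := (n : ℕ) with hm
    have hpsiX : psiAK2 N (MvPolynomial.X n) =
        ∑ i ∈ Icc 1 m, C ((i ! : ℚ) * stirling2 m i) * Xv N i := by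
      rw [psiAK2, MvPolynomial.aeval_X, if_neg (by omega)]
    rw [hpsiX, map_sum]
    have hterm : ∀ i ∈ Icc 1 m,
        DK2 N (C ((i ! : ℚ) * stirling2 m i) * Xv N i)
        = ∑ j ∈ range i, C (((i ! : ℚ) * stirling2 m i) * ((-1:ℚ)^(i+1+j) / ((i:ℚ) - (j:ℚ)))) * Xv N j := by
      intro i hi
      simp only [mem_Icc] at hi
      rw [← MvPolynomial.smul_eq_C_mul, Derivation.map_smul, DK2_Xv N i (le_trans hi.2 hmN),
        Finset.smul_sum]
      refine Finset.sum_congr rfl fun j _ => ?_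
      rw [MvPolynomial.smul_eq_C_mul, ← mul_assoc, ← MvPolynomial.C_mul]
    rw [Finset.sum_congr rfl hterm]
    rw [Finset.sum_comm' (t' := range m) (s' := fun j => Icc (j+1) m)
      (by intro i j; simp only [mem_Icc, mem_range]; omega)]
    have hinner : ∀ j ∈ range m,
        ∑ i ∈ Icc (j+1) m, C (((i ! : ℚ) * stirling2 m i) * ((-1:ℚ)^(i+1+j) / ((i:ℚ) - (j:ℚ)))) * Xv N j
        = C (((m:ℚ)) * (j ! : ℚ) * (stirling2 (m-1) j : ℚ)) * Xv N j := by
      intro j hj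
      simp only [mem_range] at hj
      rw [← Finset.sum_mul, ← map_sum]
      congr 2
      have hk := key (m-1) j (by omega)
      rw [show (m-1)+1 = m by omega] at hk
      have hcast : ((m-1:ℕ):ℚ) + 1 = (m:ℚ) := by push_cast [h1]; ring
      rw [hcast] at hk
      rw [← hk]
      refine Finset.sum_congr rfl fun i _ => ?_
      ring
    rw [Finset.sum_congr rfl hinner]
    rw [psi_Xv N (m-1) (by omega), show (m-1)+1 = m by omega, Finset.mul_sum]
    refine Finset.sum_congr rfl fun j _ => ?_
    rw [← mul_assoc, ← MvPolynomial.C_mul]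
    congr 2
    ring

/-- `ψ` intertwines the basic Weitzenböck derivation and the second Kravchuk
derivation: `D_{K2}(ψ(P)) = ψ(D(P))` for all `P`. -/
theorem psiAK2_intertwines (N : ℕ) (P : MvPolynomial (Fin (N + 1)) ℚ) :
    DK2 N (psiAK2 N P) = psiAK2 N (DW N P) := by
  induction P using MvPolynomial.induction_on with
  | C a => simp [← MvPolynomial.algebraMap_eq]
  | add p q hp hq => simp [map_add, hp, hq]
  | mul_X p n hp =>
    rw [map_mul, Derivation.leibniz, Derivation.leibniz, map_add, smul_eq_mul, smul_eq_mul,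
      smul_eq_mul, smul_eq_mul, map_mul, map_mul, hp, gen_intertwine]
end
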